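/- Let ρ > 0 be a real number, q = ⌊ρ⌋, and let μ be a positive Borel measure on ℂ whose support does not contain 0 and whose counting function μ^rad has finite type at order ρ, i.e. limsup_{t→∞} μ^rad(t)/t^ρ < ∞. Then for every z ∈ ℂ with |z| = r one has U_q^μ(z) ≤ ∫_0^∞ 𝓜_q(r/t) dμ^rad(t), where the integral is the Lebesgue–Stieltjes integral with respect to the increasing function μ^rad. -/

import Mathlib

/-!
Since `|z / w| = r / |w|`, the kernel satisfies `K_q(z/w) ≤ 𝓜_q(r/|w|)` pointwise, so the
inequality is monotonicity of the integral once `w ↦ 𝓜_q(r/|w|)` is known to be nonnegative and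
`μ`-integrable (nonnegativity also covers a non-integrable left-hand side, whose integral is `0`).
The right-hand side is `∫ 𝓜_q(r/|w|) dμ(w)` by change of variables, as `μ` does not charge `0`.

Nonnegativity: if `α^(q+1) = -s^(q+1)` and `ζ` is a primitive `(q+1)`-th root of unity, the power
sums `∑_j (ζ^j α)^k`, `1 ≤ k ≤ q`, vanish and `∏_j (1 - ζ^j α) = 1 + s^(q+1)`, so the average of
`K_q` over these `q+1` points of `|z| = s` is `log (1 + s^(q+1)) / (q+1) ≥ 0`.

Integrability: `𝓜_q(s) = O(s^(q+1))` on bounded sets (the Taylor remainder of `log (1 - z)`), and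
`∫ |w|^(-p) dμ < ∞` for `p = q + 1 > ρ` because `μ^rad(t) = O(t^ρ)` and `μ` vanishes near `0`.
-/

open MeasureTheory Filter

/-- The Weierstrass primary kernel of genus `q`:
`K_q(z) = ln |1 - z| + ∑_{k=1}^q Re (z^k / k)`. -/
noncomputable def weierstrassKernel (q : ℕ) (z : ℂ) : ℝ :=
  Real.log ‖1 - z‖ + ∑ k ∈ Finset.Icc 1 q, (z ^ k / (k : ℂ)).re

/-- `𝓜_q(r) = max_{|z| = r} K_q(z)`. -/
noncomputable def maxKernel (q : ℕ) (r : ℝ) : ℝ :=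
  sSup (weierstrassKernel q '' Metric.sphere (0 : ℂ) r)

/-- The right derivative `𝓜_q'` of `𝓜_q`. -/
noncomputable def maxKernelDeriv (q : ℕ) (t : ℝ) : ℝ :=
  derivWithin (maxKernel q) (Set.Ici t) t

/-- The counting function `μ^rad(t) = μ {z : |z| ≤ t}` of a measure on `ℂ`. -/
noncomputable def countingFun (μ : Measure ℂ) (t : ℝ) : ℝ :=
  (μ (Metric.closedBall 0 t)).toReal

/-- The averaged counting function `N_μ(t) = ∫_0^t μ^rad(s)/s ds`. -/
noncomputable def avgCountingFun (μ : Measure ℂ) (t : ℝ) : ℝ :=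
  ∫ s in (0:ℝ)..t, countingFun μ s / s

/-- `μ^rad` has finite type at order `ρ`: `limsup_{t→∞} μ^rad(t)/t^ρ < ∞`
(stated in `ℝ≥0∞`, which in particular forces `μ` to be finite on closed balls). -/
def HasFiniteType (μ : Measure ℂ) (ρ : ℝ) : Prop :=
  Filter.limsup (fun t : ℝ => μ (Metric.closedBall 0 t) / ENNReal.ofReal (t ^ ρ))
    Filter.atTop < ⊤

/-- The support of `μ` does not contain `0`, i.e. `μ` vanishes near `0`. -/
def SuppAvoidsZero (μ : Measure ℂ) : Prop :=
  ∃ ε > 0, μ (Metric.ball (0 : ℂ) ε) = 0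

/-- The canonical Hadamard–Weierstrass integral `U_q^μ(z) = ∫_ℂ K_q(z/w) dμ(w)`. -/
noncomputable def hwIntegral (q : ℕ) (μ : Measure ℂ) (z : ℂ) : ℝ :=
  ∫ w, weierstrassKernel q (z / w) ∂μ

/-- The maximum of `U_q^μ` on the circle `|z| = r`. -/
noncomputable def hwMax (q : ℕ) (μ : Measure ℂ) (r : ℝ) : ℝ :=
  sSup (hwIntegral q μ '' Metric.sphere (0 : ℂ) r)

open scoped ENNReal

lemma weierstrassKernel_le (q : ℕ) (z : ℂ) :
    weierstrassKernel q z ≤ (q + 1) * (1 + ‖z‖) ^ (q + 1) := by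
  have h1 : (1 : ℝ) ≤ 1 + ‖z‖ := le_add_of_nonneg_right (norm_nonneg z)
  have hlog : Real.log ‖1 - z‖ ≤ (1 + ‖z‖) ^ (q + 1) :=
    calc Real.log ‖1 - z‖ ≤ ‖1 - z‖ := Real.log_le_self (norm_nonneg _)
      _ ≤ 1 + ‖z‖ := by simpa using norm_sub_le (1 : ℂ) z
      _ ≤ (1 + ‖z‖) ^ (q + 1) := le_self_pow₀ h1 (Nat.succ_ne_zero q)
  have hterm : ∀ k ∈ Finset.Icc 1 q, (z ^ k / (k : ℂ)).re ≤ (1 + ‖z‖) ^ (q + 1) := by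
    intro k hk
    have hk1 : (1 : ℝ) ≤ k := by exact_mod_cast (Finset.mem_Icc.mp hk).1
    calc (z ^ k / (k : ℂ)).re ≤ ‖z ^ k / (k : ℂ)‖ := Complex.re_le_norm _
      _ = ‖z‖ ^ k / k := by rw [norm_div, norm_pow, Complex.norm_natCast]
      _ ≤ ‖z‖ ^ k := div_le_self (by positivity) hk1
      _ ≤ (1 + ‖z‖) ^ k := by gcongr; linarith
      _ ≤ (1 + ‖z‖) ^ (q + 1) := pow_le_pow_right₀ h1 (by linarith [(Finset.mem_Icc.mp hk).2])
  have hsum := Finset.sum_le_card_nsmul _ _ _ hterm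
  rw [Nat.card_Icc, add_tsub_cancel_right, nsmul_eq_mul] at hsum
  unfold weierstrassKernel
  linarith

lemma weierstrassKernel_le_two_mul_pow (q : ℕ) {z : ℂ} (hz : ‖z‖ ≤ 1 / 2) :
    weierstrassKernel q z ≤ 2 * ‖z‖ ^ (q + 1) := by
  have hz1 : ‖-z‖ < 1 := by rw [norm_neg]; linarith
  have htaylor : Complex.logTaylor (q + 1) (-z) = -∑ k ∈ Finset.Icc 1 q, z ^ k / k := by
    rw [Complex.logTaylor, Finset.range_eq_Ico, ← Finset.sum_neg_distrib,
      Finset.sum_eq_sum_Ico_succ_bot (Nat.succ_pos q)]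
    simp only [pow_zero, CharP.cast_eq_zero, div_zero, zero_add]
    refine Finset.sum_congr rfl fun k _ => ?_
    rw [neg_pow z, ← mul_assoc, ← pow_add, show k + 1 + k = 2 * k + 1 by ring, pow_succ, pow_mul]
    norm_num
    ring
  have hK : weierstrassKernel q z
      = (Complex.log (1 + -z) - Complex.logTaylor (q + 1) (-z)).re := by
    rw [htaylor, sub_neg_eq_add, Complex.add_re, Complex.log_re, Complex.re_sum, ← sub_eq_add_neg]
    rfl
  have hinv : (1 - ‖z‖)⁻¹ ≤ 2 := by
    rw [inv_le_comm₀ (by linarith) two_pos]; linarith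
  calc weierstrassKernel q z ≤ ‖Complex.log (1 + -z) - Complex.logTaylor (q + 1) (-z)‖ :=
        hK ▸ Complex.re_le_norm _
    _ ≤ ‖z‖ ^ (q + 1) * (1 - ‖z‖)⁻¹ / (q + 1) := by
        simpa only [norm_neg] using Complex.norm_log_sub_logTaylor_le q hz1
    _ ≤ ‖z‖ ^ (q + 1) * 2 / 1 := by gcongr; linarith
    _ = 2 * ‖z‖ ^ (q + 1) := by ring

lemma bddAbove_weierstrassKernel_image_sphere (q : ℕ) (s : ℝ) :
    BddAbove (weierstrassKernel q '' Metric.sphere 0 s) := by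
  refine ⟨(q + 1) * (1 + s) ^ (q + 1), ?_⟩
  rintro _ ⟨z, hz, rfl⟩
  simpa [mem_sphere_zero_iff_norm.mp hz] using weierstrassKernel_le q z

lemma weierstrassKernel_le_maxKernel (q : ℕ) (z : ℂ) :
    weierstrassKernel q z ≤ maxKernel q ‖z‖ :=
  le_csSup (bddAbove_weierstrassKernel_image_sphere q _) ⟨z, by simp, rfl⟩

lemma maxKernel_le {q : ℕ} {s B : ℝ} (hs : 0 ≤ s)
    (hB : ∀ z : ℂ, ‖z‖ = s → weierstrassKernel q z ≤ B) : maxKernel q s ≤ B := by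
  refine csSup_le ((NormedSpace.sphere_nonempty.mpr hs).image _) ?_
  rintro _ ⟨z, hz, rfl⟩
  exact hB z (mem_sphere_zero_iff_norm.mp hz)

lemma prod_one_sub_pow_mul {R : Type*} [CommRing R] [IsDomain R] {n : ℕ} {ζ : R}
    (hζ : IsPrimitiveRoot ζ n) (hn : 0 < n) (α : R) :
    ∏ j ∈ Finset.range n, (1 - ζ ^ j * α) = 1 - α ^ n := by
  simpa [Polynomial.eval_prod] using
    (congrArg (Polynomial.eval 1) (X_pow_sub_C_eq_prod hζ hn rfl)).symm

lemma sum_pow_mul_pow_eq_zero {R : Type*} [CommRing R] [IsDomain R] {n k : ℕ} {ζ : R}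
    (hζ : IsPrimitiveRoot ζ n) (hk : 0 < k) (hkn : k < n) (α : R) :
    ∑ j ∈ Finset.range n, (ζ ^ j * α) ^ k = 0 := by
  have hζk : ζ ^ k - 1 ≠ 0 := sub_ne_zero.mpr (hζ.pow_ne_one_of_pos_of_lt hk.ne' hkn)
  have hgeom := geom_sum_mul (ζ ^ k) n
  rw [← pow_mul, mul_comm k, pow_mul, hζ.pow_eq_one, one_pow, sub_self] at hgeom
  simp_rw [mul_pow, ← pow_mul, mul_comm _ k, pow_mul, ← Finset.sum_mul,
    (mul_eq_zero.mp hgeom).resolve_right hζk, zero_mul]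

lemma sum_weierstrassKernel_pow_mul (q : ℕ) {ζ α : ℂ} (hζ : IsPrimitiveRoot ζ (q + 1))
    {s : ℝ} (hs : 0 ≤ s) (hα : α ^ (q + 1) = -((s : ℂ) ^ (q + 1))) :
    ∑ j ∈ Finset.range (q + 1), weierstrassKernel q (ζ ^ j * α) = Real.log (1 + s ^ (q + 1)) := by
  have hprod : ∏ j ∈ Finset.range (q + 1), (1 - ζ ^ j * α) = ((1 + s ^ (q + 1) : ℝ) : ℂ) := by
    rw [prod_one_sub_pow_mul hζ q.succ_pos, hα]
    push_cast
    ring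
  have hpos : 0 < 1 + s ^ (q + 1) := by positivity
  have hprod_ne : ∏ j ∈ Finset.range (q + 1), (1 - ζ ^ j * α) ≠ 0 := by
    rw [hprod]; exact_mod_cast hpos.ne'
  have hne : ∀ j ∈ Finset.range (q + 1), ‖1 - ζ ^ j * α‖ ≠ 0 := fun j hj =>
    norm_ne_zero_iff.mpr (Finset.prod_ne_zero_iff.mp hprod_ne j hj)
  have hlog : ∑ j ∈ Finset.range (q + 1), Real.log ‖1 - ζ ^ j * α‖
      = Real.log (1 + s ^ (q + 1)) := by
    rw [← Real.log_prod hne, ← norm_prod, hprod, Complex.norm_real, Real.norm_of_nonneg hpos.le]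
  have hpoly : ∀ k ∈ Finset.Icc 1 q,
      ∑ j ∈ Finset.range (q + 1), ((ζ ^ j * α) ^ k / (k : ℂ)).re = 0 := by
    intro k hk
    obtain ⟨hk1, hkq⟩ := Finset.mem_Icc.mp hk
    rw [← Complex.re_sum, ← Finset.sum_div, sum_pow_mul_pow_eq_zero hζ hk1 (by omega),
      zero_div, Complex.zero_re]
  unfold weierstrassKernel
  rw [Finset.sum_add_distrib, hlog, Finset.sum_comm, Finset.sum_eq_zero hpoly, add_zero]

lemma maxKernel_nonneg (q : ℕ) {s : ℝ} (hs : 0 ≤ s) : 0 ≤ maxKernel q s := by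
  set ζ := Complex.exp (2 * Real.pi * Complex.I / (q + 1 : ℕ))
  have hζ : IsPrimitiveRoot ζ (q + 1) := Complex.isPrimitiveRoot_exp (q + 1) q.succ_ne_zero
  obtain ⟨ω, hω⟩ := IsAlgClosed.exists_pow_nat_eq (-1 : ℂ) q.succ_pos
  have hω1 : ‖ω‖ = 1 :=
    (pow_eq_one_iff_of_nonneg (norm_nonneg ω) q.succ_ne_zero).mp (by rw [← norm_pow, hω]; simp)
  set α : ℂ := s * ω
  have hsum := sum_weierstrassKernel_pow_mul q hζ hs (α := α) (by rw [mul_pow, hω]; ring)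
  have hlog : ∑ _j ∈ Finset.range (q + 1), (0 : ℝ) ≤ Real.log (1 + s ^ (q + 1)) := by
    simpa using Real.log_nonneg (by simp; positivity)
  obtain ⟨j, -, hj⟩ := Finset.exists_le_of_sum_le Finset.nonempty_range_add_one (hsum ▸ hlog)
  calc 0 ≤ weierstrassKernel q (ζ ^ j * α) := hj
    _ ≤ maxKernel q ‖ζ ^ j * α‖ := weierstrassKernel_le_maxKernel q _
    _ = maxKernel q s := by
        rw [norm_mul, norm_mul, norm_pow, hζ.norm'_eq_one q.succ_ne_zero, hω1, Complex.norm_real,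
          Real.norm_of_nonneg hs, one_pow, one_mul, mul_one]

lemma maxKernel_le_two_mul_pow (q : ℕ) {s : ℝ} (hs : 0 ≤ s) (hs2 : s ≤ 1 / 2) :
    maxKernel q s ≤ 2 * s ^ (q + 1) :=
  maxKernel_le hs fun z hz => by
    rw [← hz] at hs2 ⊢; exact weierstrassKernel_le_two_mul_pow q hs2

lemma exists_maxKernel_le_mul_pow (q : ℕ) (R : ℝ) :
    ∃ c, ∀ s, 0 ≤ s → s ≤ R → maxKernel q s ≤ c * s ^ (q + 1) := by
  refine ⟨max 2 ((q + 1) * (1 + R) ^ (q + 1) * 2 ^ (q + 1)), fun s hs hsR => ?_⟩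
  rcases le_or_gt s (1 / 2) with hs2 | hs2
  · exact (maxKernel_le_two_mul_pow q hs hs2).trans (by gcongr; exact le_max_left _ _)
  · have hB : maxKernel q s ≤ (q + 1) * (1 + R) ^ (q + 1) :=
      maxKernel_le hs fun z hz => (weierstrassKernel_le q z).trans (by rw [hz]; gcongr)
    set B : ℝ := (q + 1) * (1 + R) ^ (q + 1)
    have h1 : (1 : ℝ) ≤ (2 * s) ^ (q + 1) := one_le_pow₀ (by linarith)
    calc maxKernel q s ≤ B * (2 * s) ^ (q + 1) :=
          hB.trans (le_mul_of_one_le_right ((maxKernel_nonneg q hs).trans hB) h1)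
      _ = B * 2 ^ (q + 1) * s ^ (q + 1) := by ring
      _ ≤ max 2 (B * 2 ^ (q + 1)) * s ^ (q + 1) := by gcongr; exact le_max_right _ _

lemma continuousAt_weierstrassKernel (q : ℕ) {z : ℂ} (hz : z ≠ 1) :
    ContinuousAt (weierstrassKernel q) z := by
  have hlog : ContinuousAt (fun w : ℂ => Real.log ‖1 - w‖) z :=
    (continuous_const.sub continuous_id).norm.continuousAt.log
      (norm_ne_zero_iff.mpr (sub_ne_zero.mpr hz.symm))
  exact hlog.add (by fun_prop)

/-- `K_q` is continuous off the junk point `z = 1` (where `Real.log 0 = 0`), which itself lies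
on the ray `θ = 0`; hence rational angles suffice. -/
lemma maxKernel_eq_iSup_rat (q : ℕ) {s : ℝ} (hs : 0 ≤ s) :
    maxKernel q s = ⨆ θ : ℚ, weierstrassKernel q (s * Complex.exp ((θ : ℝ) * Complex.I)) := by
  set f : ℝ → ℝ := fun θ => weierstrassKernel q (s * Complex.exp (θ * Complex.I))
  have hnorm : ∀ θ : ℝ, ‖(s : ℂ) * Complex.exp (θ * Complex.I)‖ = s := fun θ => by
    rw [norm_mul, Complex.norm_exp_ofReal_mul_I, Complex.norm_real, Real.norm_of_nonneg hs, mul_one]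
  have hbdd : BddAbove (Set.range fun θ : ℚ => f θ) := by
    refine (bddAbove_weierstrassKernel_image_sphere q s).mono ?_
    rintro _ ⟨θ, rfl⟩
    exact ⟨_, mem_sphere_zero_iff_norm.mpr (hnorm θ), rfl⟩
  refine le_antisymm (maxKernel_le hs fun z hz => ?_) ?_
  · by_cases hz1 : z = 1
    · have hf0 : f ((0 : ℚ) : ℝ) = weierstrassKernel q z := by
        have : s = 1 := by rw [← hz, hz1, norm_one]
        simp [f, this, hz1]
      exact hf0 ▸ le_ciSup hbdd 0
    have hpolar : (s : ℂ) * Complex.exp (z.arg * Complex.I) = z := by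
      rw [← hz]; exact Complex.norm_mul_exp_arg_mul_I z
    have hcont : ContinuousAt f z.arg := by
      refine ContinuousAt.comp (g := weierstrassKernel q) ?_ (by fun_prop)
      rw [hpolar]; exact continuousAt_weierstrassKernel q hz1
    have hmem : f z.arg ∈ closure (f '' Set.range ((↑) : ℚ → ℝ)) :=
      mem_closure_image hcont (Rat.denseRange_cast z.arg)
    rw [← hpolar]
    refine (isClosed_Iic.closure_subset_iff.mpr ?_) hmem
    rintro _ ⟨_, ⟨θ, rfl⟩, rfl⟩
    exact le_ciSup hbdd θ
  · exact ciSup_le fun θ => (weierstrassKernel_le_maxKernel q _).trans_eq (by rw [hnorm])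

lemma measurable_maxKernel (q : ℕ) : Measurable (maxKernel q) := by
  have hsup : Measurable fun s : ℝ =>
      ⨆ θ : ℚ, weierstrassKernel q (s * Complex.exp ((θ : ℝ) * Complex.I)) := by
    refine Measurable.iSup fun θ => ?_
    unfold weierstrassKernel
    fun_prop
  have heq : maxKernel q = (Set.Ici 0).piecewise
      (fun s : ℝ => ⨆ θ : ℚ, weierstrassKernel q (s * Complex.exp ((θ : ℝ) * Complex.I))) 0 := by
    funext s
    by_cases hs : 0 ≤ s
    · simp [hs, maxKernel_eq_iSup_rat q hs]
    · simp [hs, maxKernel, Metric.sphere_eq_empty_of_neg (not_le.mp hs)]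
  rw [heq]
  exact hsup.piecewise measurableSet_Ici measurable_const

section Growth

variable {E : Type*} [NormedAddCommGroup E] [MeasurableSpace E] {μ : Measure E}

lemma ae_le_norm_of_measure_ball_eq_zero {ε : ℝ} (hμε : μ (Metric.ball 0 ε) = 0) :
    ∀ᵐ w ∂μ, ε ≤ ‖w‖ :=
  (measure_eq_zero_iff_ae_notMem.mp hμε).mono fun w hw => by simpa using hw

/-- Cut `{‖w‖ ≥ T}` into the dyadic shells `T 2^n ≤ ‖w‖ < T 2^(n+1)`: on the `n`-th one the
integrand is at most `(T 2^n)^(-p)` and the mass at most `C (T 2^(n+1))^ρ`, so the shells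
contribute a geometric series of ratio `2^(ρ - p) < 1`. -/
lemma setLIntegral_compl_ball_rpow_neg_lt_top [OpensMeasurableSpace E] {ρ p T : ℝ} {C : ℝ≥0∞}
    (hC : C ≠ ⊤) (hT : 0 < T) (hp : 0 ≤ p) (hρp : ρ < p)
    (hμ : ∀ t, T ≤ t → μ (Metric.closedBall 0 t) ≤ C * ENNReal.ofReal (t ^ ρ)) :
    ∫⁻ w in (Metric.ball 0 T)ᶜ, ENNReal.ofReal (‖w‖ ^ (-p)) ∂μ < ⊤ := by
  set u : ℕ → ℝ := fun n => T * 2 ^ n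
  have hu : ∀ n, 0 < u n := fun n => by positivity
  have hu_rpow : ∀ (x : ℝ) (n : ℕ), u n ^ x = T ^ x * (2 ^ x) ^ n := fun x n => by
    rw [Real.mul_rpow hT.le (by positivity), Real.rpow_pow_comm zero_le_two]
  set A : ℕ → Set E := fun n => (fun w => ‖w‖) ⁻¹' Set.Ico (u n) (u (n + 1))
  have hcover : (Metric.ball (0 : E) T)ᶜ ⊆ ⋃ n, A n := by
    intro w hw
    have hTw : 1 ≤ ‖w‖ / T := by
      rw [one_le_div hT]; simpa using hw
    obtain ⟨n, hn, hn'⟩ := exists_nat_pow_near hTw one_lt_two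
    refine Set.mem_iUnion.mpr ⟨n, ?_, ?_⟩
    · simpa [u, mul_comm, le_div_iff₀ hT] using hn
    · simpa [u, mul_comm, div_lt_iff₀ hT] using hn'
  have hshell : ∀ n, ∫⁻ w in A n, ENNReal.ofReal (‖w‖ ^ (-p)) ∂μ
      ≤ C * ENNReal.ofReal (2 ^ ρ * T ^ (ρ - p)) * ENNReal.ofReal (2 ^ (ρ - p)) ^ n := by
    intro n
    have hval : ∀ w ∈ A n, ENNReal.ofReal (‖w‖ ^ (-p)) ≤ ENNReal.ofReal (u n ^ (-p)) :=
      fun w hw => ENNReal.ofReal_le_ofReal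
        (Real.rpow_le_rpow_of_nonpos (hu n) hw.1 (neg_nonpos.mpr hp))
    have hmass : μ (A n) ≤ C * ENNReal.ofReal (u (n + 1) ^ ρ) := by
      refine (measure_mono fun w hw => ?_).trans (hμ _ (le_mul_of_one_le_right hT.le
        (one_le_pow₀ one_le_two)))
      simpa using hw.2.le
    have hprod : u n ^ (-p) * u (n + 1) ^ ρ = 2 ^ ρ * T ^ (ρ - p) * (2 ^ (ρ - p)) ^ n := by
      rw [hu_rpow, hu_rpow, Real.rpow_sub hT, Real.rpow_sub two_pos, Real.rpow_neg hT.le,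
        Real.rpow_neg zero_le_two, inv_pow, div_pow]
      field_simp
      ring
    calc ∫⁻ w in A n, ENNReal.ofReal (‖w‖ ^ (-p)) ∂μ
        ≤ ∫⁻ _ in A n, ENNReal.ofReal (u n ^ (-p)) ∂μ := setLIntegral_mono measurable_const hval
      _ = ENNReal.ofReal (u n ^ (-p)) * μ (A n) := setLIntegral_const _ _
      _ ≤ ENNReal.ofReal (u n ^ (-p)) * (C * ENNReal.ofReal (u (n + 1) ^ ρ)) := by gcongr
      _ = C * ENNReal.ofReal (2 ^ ρ * T ^ (ρ - p)) * ENNReal.ofReal (2 ^ (ρ - p)) ^ n := by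
        rw [mul_left_comm, ← ENNReal.ofReal_mul (by positivity), hprod,
          ENNReal.ofReal_mul (by positivity), ENNReal.ofReal_pow (by positivity), mul_assoc]
  have hratio : ENNReal.ofReal (2 ^ (ρ - p)) < 1 :=
    ENNReal.ofReal_lt_one.mpr (Real.rpow_lt_one_of_one_lt_of_neg one_lt_two (by linarith))
  calc ∫⁻ w in (Metric.ball 0 T)ᶜ, ENNReal.ofReal (‖w‖ ^ (-p)) ∂μ
      ≤ ∑' n, ∫⁻ w in A n, ENNReal.ofReal (‖w‖ ^ (-p)) ∂μ :=
        (lintegral_mono_set hcover).trans (lintegral_iUnion_le _ _)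
    _ ≤ ∑' n, C * ENNReal.ofReal (2 ^ ρ * T ^ (ρ - p)) * ENNReal.ofReal (2 ^ (ρ - p)) ^ n :=
        ENNReal.tsum_le_tsum hshell
    _ = C * ENNReal.ofReal (2 ^ ρ * T ^ (ρ - p)) * (1 - ENNReal.ofReal (2 ^ (ρ - p)))⁻¹ := by
        rw [ENNReal.tsum_mul_left, ENNReal.tsum_geometric]
    _ < ⊤ := by
        refine ENNReal.mul_lt_top (ENNReal.mul_lt_top hC.lt_top ENNReal.ofReal_lt_top) ?_
        exact ENNReal.inv_lt_top.mpr (tsub_pos_of_lt hratio)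

lemma integrable_norm_rpow_neg [OpensMeasurableSpace E] {ρ p ε T : ℝ} {C : ℝ≥0∞} (hC : C ≠ ⊤)
    (hε : 0 < ε) (hμε : μ (Metric.ball 0 ε) = 0) (hT : 0 < T) (hp : 0 ≤ p) (hρp : ρ < p)
    (hμ : ∀ t, T ≤ t → μ (Metric.closedBall 0 t) ≤ C * ENNReal.ofReal (t ^ ρ)) :
    Integrable (fun w => ‖w‖ ^ (-p)) μ := by
  refine ⟨(measurable_norm.pow_const _).aestronglyMeasurable, ?_⟩
  rw [hasFiniteIntegral_iff_ofReal (ae_of_all _ fun w => Real.rpow_nonneg (norm_nonneg w) _),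
    ← lintegral_add_compl _ (measurableSet_ball (x := (0 : E)) (ε := T))]
  refine ENNReal.add_lt_top.mpr ⟨?_, setLIntegral_compl_ball_rpow_neg_lt_top hC hT hp hρp hμ⟩
  have hbound : ∀ᵐ w ∂μ, ENNReal.ofReal (‖w‖ ^ (-p)) ≤ ENNReal.ofReal (ε ^ (-p)) :=
    (ae_le_norm_of_measure_ball_eq_zero hμε).mono fun w hw =>
      ENNReal.ofReal_le_ofReal (Real.rpow_le_rpow_of_nonpos hε hw (neg_nonpos.mpr hp))
  have hball : μ (Metric.ball 0 T) < ⊤ :=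
    (measure_mono Metric.ball_subset_closedBall).trans_lt
      ((hμ T le_rfl).trans_lt (ENNReal.mul_lt_top hC.lt_top ENNReal.ofReal_lt_top))
  calc ∫⁻ w in Metric.ball 0 T, ENNReal.ofReal (‖w‖ ^ (-p)) ∂μ
      ≤ ∫⁻ _ in Metric.ball 0 T, ENNReal.ofReal (ε ^ (-p)) ∂μ :=
        lintegral_mono_ae (ae_restrict_of_ae hbound)
    _ = ENNReal.ofReal (ε ^ (-p)) * μ (Metric.ball 0 T) := setLIntegral_const _ _
    _ < ⊤ := ENNReal.mul_lt_top ENNReal.ofReal_lt_top hball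

end Growth

lemma HasFiniteType.exists_measure_closedBall_le {μ : Measure ℂ} {ρ : ℝ}
    (hft : HasFiniteType μ ρ) :
    ∃ C : ℝ≥0∞, C ≠ ⊤ ∧ ∃ T > 0,
      ∀ t, T ≤ t → μ (Metric.closedBall 0 t) ≤ C * ENNReal.ofReal (t ^ ρ) := by
  set L := Filter.limsup (fun t : ℝ => μ (Metric.closedBall 0 t) / ENNReal.ofReal (t ^ ρ))
    Filter.atTop
  obtain ⟨t₀, ht₀⟩ := Filter.eventually_atTop.mp
    (Filter.eventually_lt_of_limsup_lt (ENNReal.lt_add_right hft.ne one_ne_zero))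
  refine ⟨L + 1, by simpa using hft.ne, max t₀ 1, by positivity, fun t ht => ?_⟩
  have htρ : ENNReal.ofReal (t ^ ρ) ≠ 0 := by
    simpa using Real.rpow_pos_of_pos (one_pos.trans_le ((le_max_right _ _).trans ht)) ρ
  exact (ENNReal.div_lt_iff (Or.inl htρ) (Or.inl ENNReal.ofReal_ne_top)).mp
    (ht₀ t ((le_max_left _ _).trans ht)) |>.le

lemma integrable_maxKernel_div_norm {q : ℕ} {ρ ε r : ℝ} {μ : Measure ℂ}
    (hft : HasFiniteType μ ρ) (hρq : ρ < q + 1) (hε : 0 < ε)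
    (hμε : μ (Metric.ball 0 ε) = 0) (hr : 0 ≤ r) :
    Integrable (fun w => maxKernel q (r / ‖w‖)) μ := by
  obtain ⟨C, hC, T, hT, hμ⟩ := hft.exists_measure_closedBall_le
  obtain ⟨c, hc⟩ := exists_maxKernel_le_mul_pow q (r / ε)
  have hpow : Integrable (fun w : ℂ => ‖w‖ ^ (-((q : ℝ) + 1))) μ :=
    integrable_norm_rpow_neg hC hε hμε hT (by positivity) hρq hμ
  refine (hpow.const_mul (c * r ^ (q + 1))).mono'
    ((measurable_maxKernel q).comp (measurable_const.div measurable_norm)).aestronglyMeasurable ?_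
  filter_upwards [ae_le_norm_of_measure_ball_eq_zero hμε] with w hw
  have hw0 : 0 < ‖w‖ := hε.trans_le hw
  have hs : 0 ≤ r / ‖w‖ := div_nonneg hr hw0.le
  rw [Real.norm_of_nonneg (maxKernel_nonneg q hs)]
  calc maxKernel q (r / ‖w‖) ≤ c * (r / ‖w‖) ^ (q + 1) :=
        hc _ hs (div_le_div_of_nonneg_left hr hε hw)
    _ = c * r ^ (q + 1) * ‖w‖ ^ (-((q : ℝ) + 1)) := by
        rw [Real.rpow_neg hw0.le, show (q : ℝ) + 1 = ((q + 1 : ℕ) : ℝ) by push_cast; ring,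
          Real.rpow_natCast, div_pow]
        ring

theorem valiron_stmt0_general (ρ : ℝ) (q : ℕ) (hq : q = ⌊ρ⌋₊)
    (μ : Measure ℂ) (hsupp : SuppAvoidsZero μ) (hft : HasFiniteType μ ρ)
    (z : ℂ) (r : ℝ) (hr : ‖z‖ = r) :
    hwIntegral q μ z ≤
      ∫ t in Set.Ioi (0:ℝ), maxKernel q (r / t)
        ∂(Measure.map (fun w : ℂ => ‖w‖) μ) := by
  obtain ⟨ε, hε, hμε⟩ := hsupp
  have hae := ae_le_norm_of_measure_ball_eq_zero hμε
  have hr0 : 0 ≤ r := hr ▸ norm_nonneg z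
  have hρq : ρ < q + 1 := hq ▸ Nat.lt_floor_add_one ρ
  have hm : Measurable fun t : ℝ => maxKernel q (r / t) :=
    (measurable_maxKernel q).comp (measurable_const.div measurable_id)
  rw [setIntegral_map measurableSet_Ioi hm.aestronglyMeasurable measurable_norm.aemeasurable,
    Measure.restrict_eq_self_of_ae_mem (s := norm ⁻¹' Set.Ioi 0)
      (hae.mono fun w hw => hε.trans_le hw)]
  have hle : ∀ᵐ w ∂μ, weierstrassKernel q (z / w) ≤ maxKernel q (r / ‖w‖) :=
    ae_of_all _ fun w => by simpa [norm_div, hr] using weierstrassKernel_le_maxKernel q (z / w)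
  by_cases hK : Integrable (fun w => weierstrassKernel q (z / w)) μ
  · exact integral_mono_ae hK (integrable_maxKernel_div_norm hft hρq hε hμε hr0) hle
  · rw [hwIntegral, integral_undef hK]
    exact integral_nonneg_of_ae
      (hae.mono fun w hw => maxKernel_nonneg q (div_nonneg hr0 (hε.le.trans hw)))

/-- For `ρ > 0`, `q = ⌊ρ⌋`, and a positive Borel measure `μ` on `ℂ`
whose support avoids `0` and whose counting function has finite type at order `ρ`,
for every `z` with `|z| = r` one has `U_q^μ(z) ≤ ∫_0^∞ 𝓜_q(r/t) dμ^rad(t)`.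
The Lebesgue–Stieltjes measure of the increasing function `μ^rad` on `(0,∞)` is the
pushforward of `μ` under `w ↦ |w|`. -/
theorem valiron_stmt0 (ρ : ℝ) (hρ : 0 < ρ) (q : ℕ) (hq : q = ⌊ρ⌋₊)
    (μ : Measure ℂ) (hsupp : SuppAvoidsZero μ) (hft : HasFiniteType μ ρ)
    (z : ℂ) (r : ℝ) (hr : ‖z‖ = r) :
    hwIntegral q μ z ≤
      ∫ t in Set.Ioi (0:ℝ), maxKernel q (r / t)
        ∂(Measure.map (fun w : ℂ => ‖w‖) μ) :=
  valiron_stmt0_general ρ q hq μ hsupp hft z r hr
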